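/- (Hardy no-go theorem) Let n = 2 and A = B = Fin 2, and let X be a Hardy team. Then for every nonempty type C there is no hidden-variable team Y ⊆ (Fin 2 → Fin 2) × (Fin 2 → Fin 2) × C that realizes X and supports both z-independence and locality. -/
import Mathlib


/-- A hidden-variable team: a set of assignments `(a, b, c)` where `a` gives the
measurement values, `b` the outcome values and `c` the hidden-variable value. -/
abbrev HVTeam (n : ℕ) (A B C : Type) := Set ((Fin n → A) × (Fin n → B) × C)

/-- An empirical team: a set of assignments `(a, b)`. -/
abbrev EmpTeam (n : ℕ) (A B : Type) := Set ((Fin n → A) × (Fin n → B))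

/-- A hidden-variable team `Y` realizes an empirical team `X`. -/
def Realizes {n : ℕ} {A B C : Type} (Y : HVTeam n A B C) (X : EmpTeam n A B) : Prop :=
  X = {ab | ∃ c, (ab.1, ab.2, c) ∈ Y}

/-- z-independence: the hidden variable is independent of the measurements. -/
def ZIndependence {n : ℕ} {A B C : Type} (Y : HVTeam n A B C) : Prop :=
  ∀ s ∈ Y, ∀ s' ∈ Y, ∃ s'' ∈ Y, s''.2.2 = s.2.2 ∧ ∀ i, s''.1 i = s'.1 i

/-- Locality. -/
def Locality {n : ℕ} {A B C : Type} (Y : HVTeam n A B C) : Prop :=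
  ∀ f : Fin n → ((Fin n → A) × (Fin n → B) × C), (∀ i, f i ∈ Y) →
    (∃ s ∈ Y, ∀ i, s.1 i = (f i).1 i ∧ s.2.2 = (f i).2.2) →
    ∃ s' ∈ Y, ∀ i, s'.1 i = (f i).1 i ∧ s'.2.1 i = (f i).2.1 i ∧ s'.2.2 = (f i).2.2

/-- A Hardy team: the assignment (0,0,0,0) belongs to the team, the assignments
(0,1,0,0), (1,0,0,0) and (1,1,1,1) do not, and every measurement combination
occurs. -/
def IsHardyTeam (X : EmpTeam 2 (Fin 2) (Fin 2)) : Prop :=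
  ((![0, 0], ![0, 0]) ∈ X ∧
    (![0, 1], ![0, 0]) ∉ X ∧ (![1, 0], ![0, 0]) ∉ X ∧ (![1, 1], ![1, 1]) ∉ X) ∧
  ∀ a₀ a₁ : Fin 2, ∃ s ∈ X, s.1 0 = a₀ ∧ s.1 1 = a₁

/-- Hardy no-go theorem: no Hardy team is realized by a hidden-variable team
supporting z-independence and locality. -/
theorem hardy_no_go (X : EmpTeam 2 (Fin 2) (Fin 2)) (hX : IsHardyTeam X)
    (C : Type) [Nonempty C] :
    ¬ ∃ Y : HVTeam 2 (Fin 2) (Fin 2) C,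
        Realizes Y X ∧ ZIndependence Y ∧ Locality Y := by
  rintro ⟨Y, hR, hZ, hL⟩
  obtain ⟨⟨h00, h01, h10, h11⟩, hfull⟩ := hX
  rw [hR] at h00 h01 h10 h11
  obtain ⟨c₀, hc₀⟩ := h00
  -- For every measurement pair, there is an assignment in Y with hidden value c₀.
  have key : ∀ a₀ a₁ : Fin 2, ∃ a b, a 0 = a₀ ∧ a 1 = a₁ ∧ (a, b, c₀) ∈ Y := by
    intro a₀ a₁
    obtain ⟨s, hs, h0, h1⟩ := hfull a₀ a₁
    rw [hR] at hs
    obtain ⟨c, hc⟩ := hs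
    obtain ⟨s'', hs'', hz, hx⟩ := hZ _ hc₀ _ hc
    have hz' : s''.2.2 = c₀ := hz
    refine ⟨s''.1, s''.2.1, by rw [hx 0]; exact h0, by rw [hx 1]; exact h1, ?_⟩
    rw [← hz']; exact hs''
  obtain ⟨a10, b10, ha10_0, ha10_1, hm10⟩ := key 1 0
  obtain ⟨a01, b01, ha01_0, ha01_1, hm01⟩ := key 0 1
  obtain ⟨a11, b11, ha11_0, ha11_1, hm11⟩ := key 1 1
  -- Locality applied to (00,00,c₀) and (a01,b01,c₀): forces b01 1 = 1.
  have hb01 : b01 1 = 1 := by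
    obtain ⟨⟨sa, sb, sc⟩, hs', hprop⟩ :=
      hL ![(![0, 0], ![0, 0], c₀), (a01, b01, c₀)]
        (by intro i; fin_cases i <;> simpa using (by first | exact hc₀ | exact hm01))
        ⟨(a01, b01, c₀), hm01, by
          intro i; fin_cases i <;> simp [ha01_0]⟩
    by_contra hb
    have hb' : b01 1 = 0 := by omega
    apply h01
    refine ⟨c₀, ?_⟩
    have e1 : sa = ![0, 1] := by
      funext i; fin_cases i
      · simpa using (hprop 0).1
      · have := (hprop 1).1; simp at this; simp [this, ha01_1]
    have e2 : sb = ![0, 0] := by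
      funext i; fin_cases i
      · simpa using (hprop 0).2.1
      · have := (hprop 1).2.1; simp at this; simp [this, hb']
    have e3 : sc = c₀ := by simpa using (hprop 0).2.2
    subst e1 e2 e3; exact hs'
  -- Symmetric: forces b10 0 = 1.
  have hb10 : b10 0 = 1 := by
    obtain ⟨⟨sa, sb, sc⟩, hs', hprop⟩ :=
      hL ![(a10, b10, c₀), (![0, 0], ![0, 0], c₀)]
        (by intro i; fin_cases i <;> simpa using (by first | exact hm10 | exact hc₀))
        ⟨(a10, b10, c₀), hm10, by
          intro i; fin_cases i <;> simp [ha10_1]⟩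
    by_contra hb
    have hb' : b10 0 = 0 := by omega
    apply h10
    refine ⟨c₀, ?_⟩
    have e1 : sa = ![1, 0] := by
      funext i; fin_cases i
      · have := (hprop 0).1; simp at this; simp [this, ha10_0]
      · simpa using (hprop 1).1
    have e2 : sb = ![0, 0] := by
      funext i; fin_cases i
      · have := (hprop 0).2.1; simp at this; simp [this, hb']
      · simpa using (hprop 1).2.1
    have e3 : sc = c₀ := by simpa using (hprop 0).2.2
    subst e1 e2 e3; exact hs'
  -- Final locality application: produces (11,11,c₀) ∈ Y, contradiction.
  obtain ⟨⟨sa, sb, sc⟩, hs', hprop⟩ :=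
    hL ![(a10, b10, c₀), (a01, b01, c₀)]
      (by intro i; fin_cases i <;> simpa using (by first | exact hm10 | exact hm01))
      ⟨(a11, b11, c₀), hm11, by
        intro i; fin_cases i <;> simp [ha11_0, ha11_1, ha10_0, ha01_1]⟩
  apply h11
  refine ⟨c₀, ?_⟩
  have e1 : sa = ![1, 1] := by
    funext i; fin_cases i
    · have := (hprop 0).1; simp at this; simp [this, ha10_0]
    · have := (hprop 1).1; simp at this; simp [this, ha01_1]
  have e2 : sb = ![1, 1] := by
    funext i; fin_cases i
    · have := (hprop 0).2.1; simp at this; simp [this, hb10]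
    · have := (hprop 1).2.1; simp at this; simp [this, hb01]
  have e3 : sc = c₀ := by simpa using (hprop 0).2.2
  subst e1 e2 e3; exact hs'
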